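/- arXiv:2506.09415 — 2 statements merged into one kernel-verified Lean document; each statement's English description precedes it below -/
import Mathlib

section
/- The product vector w_1^⊥ ⊗ w_2^⊥ ∈ ℂ²⊗ℂ² satisfies ⟨w_1 ⊗ w_1, w_1^⊥ ⊗ w_2^⊥⟩ = 0, ⟨w_2 ⊗ w_2, w_1^⊥ ⊗ w_2^⊥⟩ = 0, and ⟨w_0 ⊗ w_0, w_1^⊥ ⊗ w_2^⊥⟩ = 3/4 ≠ 0; i.e., it is a product detecting state for w_0 ⊗ w_0 within the double-trine ensemble. -/
/-!
The inner product of product vectors factors, `⟪a ⊗ b, c ⊗ d⟫ = ⟪a, c⟫ ⟪b, d⟫`, and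
`⟪w_j, w_k^⊥⟫ = sin((j - k)π/3)`. Hence each of the first two amplitudes has a factor
`⟪w_k, w_k^⊥⟫ = 0`, while the third is `sin(-π/3) sin(-2π/3) = sin²(π/3) = 3/4`.
-/

noncomputable section
open scoped ComplexInnerProductSpace

/-- The qubit Hilbert space `ℂ²`. -/
abbrev Qubit : Type := EuclideanSpace ℂ (Fin 2)

/-- The (Kronecker) tensor product of two vectors, realized in `EuclideanSpace ℂ (ι × κ)`. -/
def tp {ι κ : Type} (x : EuclideanSpace ℂ ι) (y : EuclideanSpace ℂ κ) :
    EuclideanSpace ℂ (ι × κ) :=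
  (WithLp.equiv 2 (ι × κ → ℂ)).symm (fun p => x p.1 * y p.2)

/-- A qubit vector from its two coordinates. -/
def mk2 (a b : ℂ) : Qubit := (WithLp.equiv 2 (Fin 2 → ℂ)).symm ![a, b]

/-- The trine states `w_k = cos(kπ/3)|0⟩ + sin(kπ/3)|1⟩`. -/
def w (k : Fin 3) : Qubit :=
  mk2 (Real.cos ((k : ℕ) * Real.pi / 3)) (Real.sin ((k : ℕ) * Real.pi / 3))

/-- The orthogonal trine states `w_k^⊥ = -sin(kπ/3)|0⟩ + cos(kπ/3)|1⟩`. -/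
def wperp (k : Fin 3) : Qubit :=
  mk2 (-(Real.sin ((k : ℕ) * Real.pi / 3))) (Real.cos ((k : ℕ) * Real.pi / 3))

open Real ComplexConjugate

lemma inner_tp {ι κ : Type} [Fintype ι] [Fintype κ]
    (x u : EuclideanSpace ℂ ι) (y v : EuclideanSpace ℂ κ) :
    ⟪tp x y, tp u v⟫ = ⟪x, u⟫ * ⟪y, v⟫ := by
  simp only [tp, PiLp.inner_apply, WithLp.equiv_symm_apply, RCLike.inner_apply, map_mul,
    Fintype.sum_prod_type, Finset.sum_mul_sum]
  exact Finset.sum_congr rfl fun _ _ => Finset.sum_congr rfl fun _ _ => by ring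

lemma inner_mk2 (a b c d : ℂ) : ⟪mk2 a b, mk2 c d⟫ = conj a * c + conj b * d := by
  simp [mk2, PiLp.inner_apply, Fin.sum_univ_two, mul_comm]

lemma inner_w_wperp_eq_sin (j k : Fin 3) :
    ⟪w j, wperp k⟫ = Real.sin ((j : ℕ) * π / 3 - (k : ℕ) * π / 3) := by
  simp only [w, wperp, inner_mk2, Complex.conj_ofReal, Real.sin_sub]
  push_cast
  ring

lemma inner_w_wperp_self (k : Fin 3) : ⟪w k, wperp k⟫ = 0 := by
  simp [inner_w_wperp_eq_sin]

lemma inner_w_zero_wperp_one_mul_inner_w_zero_wperp_two :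
    ⟪w 0, wperp 1⟫ * ⟪w 0, wperp 2⟫ = 3 / 4 := by
  have two_pi_div_three : 2 * π / 3 = π - π / 3 := by ring
  rw [inner_w_wperp_eq_sin, inner_w_wperp_eq_sin, ← Complex.ofReal_mul]
  -- keep the cast outside `sin`, so that the real identity `sin (π / 3) ^ 2 = 3 / 4` applies
  norm_num [two_pi_div_three, Real.sin_pi_sub, ← sq, -sin_pi_div_three, -Complex.ofReal_sin,
    sq_sin_pi_div_three]

/-- `⟨w_1⊗w_1, w_1^⊥⊗w_2^⊥⟩ = 0`, `⟨w_2⊗w_2, w_1^⊥⊗w_2^⊥⟩ = 0`, and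
`⟨w_0⊗w_0, w_1^⊥⊗w_2^⊥⟩ = 3/4 ≠ 0`. -/
theorem double_trine_detecting_w0 :
    ⟪tp (w 1) (w 1), tp (wperp 1) (wperp 2)⟫ = 0 ∧
    ⟪tp (w 2) (w 2), tp (wperp 1) (wperp 2)⟫ = 0 ∧
    ⟪tp (w 0) (w 0), tp (wperp 1) (wperp 2)⟫ = (3 / 4 : ℂ) ∧
    ⟪tp (w 0) (w 0), tp (wperp 1) (wperp 2)⟫ ≠ 0 := by
  have amp : ⟪tp (w 0) (w 0), tp (wperp 1) (wperp 2)⟫ = 3 / 4 := by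
    rw [inner_tp, inner_w_zero_wperp_one_mul_inner_w_zero_wperp_two]
  refine ⟨?_, ?_, amp, by rw [amp]; norm_num⟩
  · rw [inner_tp, inner_w_wperp_self, zero_mul]
  · rw [inner_tp, inner_w_wperp_self, mul_zero]
end
end

section
/- Let N and m be positive integers with m ≤ N, and let v : Fin N → V be a family of vectors that is NOT linearly independent. Then the family of m-CLSM states, i.e., the family indexed by injective maps p : Fin m → Fin N whose member at p is v_p = v(p 0) ⊗ v(p 1) ⊗ ⋯ ⊗ v(p(m−1)) ∈ V^{⊗m}, is not linearly independent. (Proposition 2: for any linearly dependent set of multipartite quantum states, the m-CLSM task is impossible for every m, since linear independence is necessary for conclusive discrimination.) -/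
/-!
Take a relation `∑ i, c i • v i = 0` and an index `j`. Since `m ≤ N`, there is an injective
`(m-1)`-tuple `q` of indices avoiding `j`. Feed `∑ i, c i • v i` together with `v ∘ q` into the
antisymmetrization `F` of `tprod`: by linearity in the first slot,
`0 = ∑ i, c i • F (v i, v ∘ q)`, and the terms with `i` in the range of `q` vanish because `F`
is alternating. Expanding the rest gives
`∑_{i ∉ range q} ∑_σ c i * sign σ • v_{(i, q) ∘ σ} = 0`, where the tuples `(i, q) ∘ σ` are
pairwise distinct injective tuples. Linear independence of the `m`-CLSM family therefore forces
every coefficient to vanish, in particular `c j = c j * sign 1`.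
-/

open scoped TensorProduct
open PiTensorProduct Function

/-- The `m`-CLSM family built from a family `v`: for each injective tuple
`p : Fin m → ι` of indices, the tensor product `v (p 0) ⊗ ⋯ ⊗ v (p (m-1))`
in the `m`-fold tensor power of `V`. -/
noncomputable def clsmFamily {V : Type*} [AddCommGroup V] [Module ℂ V] {ι : Type*} (m : ℕ)
    (v : ι → V) (p : {p : Fin m → ι // Function.Injective p}) :
    ⨂[ℂ] _ : Fin m, V :=
  ⨂ₜ[ℂ] i, v (p.1 i)

section

variable {R M ι : Type*} [CommRing R] [AddCommGroup M] [Module R M]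

theorem alternatization_tprod_apply {n : ℕ} (x : Fin n → M) :
    (tprod R : MultilinearMap R (fun _ : Fin n => M) _).alternatization x =
      ∑ σ : Equiv.Perm (Fin n), ((Equiv.Perm.sign σ : ℤ) : R) • ⨂ₜ[R] i, x (σ i) := by
  simp [MultilinearMap.alternatization_apply, Units.smul_def, Int.cast_smul_eq_zsmul]

theorem MultilinearMap.map_cons_sum {N : Type*} [AddCommGroup N] [Module R N] [Fintype ι]
    {n : ℕ} (f : MultilinearMap R (fun _ : Fin (n + 1) => M) N) (c : ι → R) (v : ι → M)
    (w : Fin n → M) :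
    f (Fin.cons (∑ i, c i • v i) w) = ∑ i, c i • f (Fin.cons (v i) w) := by
  simp [← curryLeft_apply, _root_.map_sum]

def consPerm {n : ℕ} (q : Fin n → ι) (hq : Injective q)
    (x : {i // i ∉ Set.range q} × Equiv.Perm (Fin (n + 1))) :
    {p : Fin (n + 1) → ι // Injective p} :=
  ⟨Fin.cons x.1.1 q ∘ x.2, (Fin.cons_injective_iff.2 ⟨x.1.2, hq⟩).comp x.2.injective⟩

theorem consPerm_injective {n : ℕ} (q : Fin n → ι) (hq : Injective q) :
    Injective (consPerm q hq) := by
  rintro ⟨⟨i, hi⟩, σ⟩ ⟨⟨i', _⟩, σ'⟩ h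
  have h : Fin.cons i q ∘ σ = Fin.cons i' q ∘ σ' := congrArg Subtype.val h
  have hrange := congrArg Set.range h
  simp only [EquivLike.range_comp, Fin.range_cons] at hrange
  have hii' : i = i' := by
    have : i ∈ insert i' (Set.range q) := hrange ▸ Set.mem_insert i _
    exact this.resolve_right hi
  subst hii'
  have hσ : σ = σ' :=
    Equiv.ext fun k => (Fin.cons_injective_iff.2 ⟨hi, hq⟩) (congrFun h k)
  rw [hσ]

theorem sum_smul_tprod_consPerm [Fintype ι] [DecidableEq ι] {n : ℕ} (q : Fin n → ι)
    (hq : Injective q) (c : ι → R) (v : ι → M) :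
    ∑ x, (c x.1 * ((Equiv.Perm.sign x.2 : ℤ) : R)) • (⨂ₜ[R] k, v ((consPerm q hq x).1 k)) =
      (tprod R : MultilinearMap R (fun _ : Fin (n + 1) => M) _).alternatization
        (Fin.cons (∑ i, c i • v i) (v ∘ q)) := by
  set F := (tprod R : MultilinearMap R (fun _ : Fin (n + 1) => M) _).alternatization
  have hvanish : ∀ i ∈ Set.range q, F (Fin.cons (v i) (v ∘ q)) = 0 := by
    rintro i ⟨t, rfl⟩
    exact F.map_eq_zero_of_eq _ (i := 0) (j := t.succ) (by simp) (Fin.succ_ne_zero t).symm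
  have hcons : ∀ i, (Fin.cons (v i) (v ∘ q) : Fin (n + 1) → M) = v ∘ Fin.cons i q :=
    fun i => funext (Fin.cases rfl fun _ => rfl)
  calc ∑ x, (c x.1 * ((Equiv.Perm.sign x.2 : ℤ) : R)) • (⨂ₜ[R] k, v ((consPerm q hq x).1 k))
      = ∑ i : {i // i ∉ Set.range q}, c i • F (Fin.cons (v i) (v ∘ q)) := by
        rw [Fintype.sum_prod_type]
        refine Finset.sum_congr rfl fun i _ => ?_
        rw [hcons, alternatization_tprod_apply, Finset.smul_sum]
        simp [consPerm, mul_smul]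
    _ = ∑ i, c i • F (Fin.cons (v i) (v ∘ q)) := by
        rw [← Fintype.sum_subtype_add_sum_subtype (· ∉ Set.range q), left_eq_add]
        exact Fintype.sum_eq_zero _ fun i => by rw [hvanish i (not_not.1 i.2), smul_zero]
    _ = F (Fin.cons (∑ i, c i • v i) (v ∘ q)) :=
        (F.toMultilinearMap.map_cons_sum c v (v ∘ q)).symm

theorem linearIndependent_of_linearIndependent_tprod [Fintype ι] {n : ℕ}
    (hn : n < Fintype.card ι) (v : ι → M)
    (h : LinearIndependent R
      fun p : {p : Fin (n + 1) → ι // Injective p} => ⨂ₜ[R] k, v (p.1 k)) :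
    LinearIndependent R v := by
  classical
  rw [Fintype.linearIndependent_iff]
  intro c hc j
  obtain ⟨q⟩ : Nonempty (Fin n ↪ {i // i ≠ j}) :=
    Function.Embedding.nonempty_of_card_le (by
      simp only [Fintype.card_fin, ne_eq, Fintype.card_subtype_compl, Fintype.card_unique]; omega)
  have hqj : j ∉ Set.range (Subtype.val ∘ q) := by rintro ⟨t, ht⟩; exact (q t).2 ht
  have hq : Injective (Subtype.val ∘ q) := Subtype.val_injective.comp q.injective
  have hrel : ∑ x, (c x.1 * ((Equiv.Perm.sign x.2 : ℤ) : R)) •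
      (⨂ₜ[R] k, v ((consPerm _ hq x).1 k)) = 0 := by
    rw [sum_smul_tprod_consPerm, hc]
    exact AlternatingMap.map_coord_zero _ 0 rfl
  simpa using Fintype.linearIndependent_iff.1 (h.comp _ (consPerm_injective _ hq)) _ hrel
    (⟨j, hqj⟩, 1)

end

theorem clsm_of_linearDependent_not_linearIndependent_general
    {V : Type*} [AddCommGroup V] [Module ℂ V] {N m : ℕ}
    (hm : 0 < m) (hmN : m ≤ N)
    (v : Fin N → V) (hv : ¬ LinearIndependent ℂ v) :
    ¬ LinearIndependent ℂ (clsmFamily (V := V) m v) := by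
  obtain ⟨n, rfl⟩ : ∃ n, m = n + 1 := ⟨m - 1, by omega⟩
  exact fun h => hv (linearIndependent_of_linearIndependent_tprod (by simpa using hmN) v h)

/-- For a linearly dependent family, the `m`-CLSM family is linearly dependent
for every `1 ≤ m ≤ N`. -/
theorem clsm_of_linearDependent_not_linearIndependent
    {V : Type*} [AddCommGroup V] [Module ℂ V] {N m : ℕ}
    (hN : 0 < N) (hm : 0 < m) (hmN : m ≤ N)
    (v : Fin N → V) (hv : ¬ LinearIndependent ℂ v) :
    ¬ LinearIndependent ℂ (clsmFamily (V := V) m v) :=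
  clsm_of_linearDependent_not_linearIndependent_general hm hmN v hv
end
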